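/- Let Γ be a connected finite simplicial graph and let H_Φ be a strong generalized Bestvina–Brady subgroup of A_Γ with basis subgraphs Γ₁, …, Γ_d. If each basis subgraph Γ_i is a join and each pair of distinct basis subgraphs commutes (every vertex of Γ_i is adjacent to every vertex of Γ_j for i ≠ j), then the distortion of H_Φ in A_Γ is linear, i.e. Dist_{A_Γ}^{H_Φ} ∼ n. -/

import Mathlib

/-- The word length of `g` with respect to a set `S` of letters. -/
noncomputable def wordLength {G : Type*} [Group G] (S : Set G) (g : G) : ℕ :=
  sInf {n | ∃ l : List G, l.length = n ∧ (∀ x ∈ l, x ∈ S ∨ x⁻¹ ∈ S) ∧ l.prod = g}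

/-- The distortion function: `Dist(r) = max { |h|_T : h ∈ H, |h|_S ≤ r }`. -/
noncomputable def distortion {G : Type*} [Group G] (S T : Set G) (H : Subgroup G)
    (r : ℕ) : ℕ :=
  sSup {n | ∃ h ∈ H, wordLength S h ≤ r ∧ wordLength T h = n}

/-- `f ⪯ g`. -/
def Dominated (f g : ℕ → ℕ) : Prop :=
  ∃ A B C D : ℕ, 0 < A ∧ 0 < B ∧ 0 < C ∧ ∀ x : ℕ, D < x → f x ≤ A * g (B * x) + C * x

/-- `f ∼ g`. -/
def FEquiv (f g : ℕ → ℕ) : Prop := Dominated f g ∧ Dominated g f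

/-- The defining relators of the right-angled Artin group of a graph `Γ`. -/
def raagRels {V : Type*} (Γ : SimpleGraph V) : Set (FreeGroup V) :=
  {r | ∃ u v : V, Γ.Adj u v ∧
    r = FreeGroup.of u * FreeGroup.of v * (FreeGroup.of u)⁻¹ * (FreeGroup.of v)⁻¹}

/-- The right-angled Artin group of a graph `Γ`. -/
abbrev RAAG {V : Type*} (Γ : SimpleGraph V) : Type _ := PresentedGroup (raagRels Γ)

/-- The standard generator of `RAAG Γ` associated to a vertex. -/
def raagGen {V : Type*} (Γ : SimpleGraph V) (v : V) : RAAG Γ := PresentedGroup.of v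

/-- A graph is a join if its vertex set splits into two nonempty parts with every
vertex of one part adjacent to every vertex of the other. -/
def IsJoin {α : Type*} (Γ : SimpleGraph α) : Prop :=
  ∃ V₁ V₂ : Set α, V₁.Nonempty ∧ V₂.Nonempty ∧ Disjoint V₁ V₂ ∧ V₁ ∪ V₂ = Set.univ ∧
    ∀ u ∈ V₁, ∀ v ∈ V₂, Γ.Adj u v

/-!
Choose a join decomposition `A_i ⊔ B_i` of each basis subgraph. Since distinct basis subgraphs
commute, `Γ` is the join of `A = ⋃ A_i` and `B = ⋃ B_i`. Fix `a_i ∈ A_i`, `b_i ∈ B_i`, and let the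
partner of a vertex of `A_i` be `b_i` and that of a vertex of `B_i` be `a_i`; partners pairwise
commute. Projecting to `A` and `B` and pulling the partners out writes every `h` as
`σ_A(h) · τ(h) · σ_B(h)`, where `σ_U` (`shiftHom`) sends `v ∈ U` to `v · partner(v)⁻¹` and the
other generators to `1`, and `τ` (`partnerHom`) sends `v` to its partner. Moreover
`τ(h) = κ(h) · ∏ a_i ^ Φ(h)_i` with `κ(v) = partner(v) · a_{lab v}⁻¹` (`partnerRatioHom`), so for
`h ∈ ker Φ` we get `h = σ_A(h) · κ(h) · σ_B(h)`: three homomorphic images of `h`, each sending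
generators to elements `v w⁻¹` with `lab v = lab w`. These finitely many elements lie in `H_Φ`,
whence `|h|_T ≤ 3 M |h|_S`.
-/

open Subgroup

section WordLength

variable {G H : Type*} [Group G] [Group H] {S T : Set G} {g g' : G}

lemma wordLength_le_length {l : List G} (hl : ∀ x ∈ l, x ∈ S ∨ x⁻¹ ∈ S) :
    wordLength S l.prod ≤ l.length :=
  Nat.sInf_le ⟨l, rfl, hl, rfl⟩

lemma exists_list_length_eq_wordLength (hg : g ∈ closure S) :
    ∃ l : List G, l.length = wordLength S g ∧ (∀ x ∈ l, x ∈ S ∨ x⁻¹ ∈ S) ∧ l.prod = g := by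
  rw [← mem_toSubmonoid, closure_toSubmonoid] at hg
  obtain ⟨l, hl, rfl⟩ := Submonoid.exists_list_of_mem_closure hg
  exact Nat.sInf_mem (s := {n | ∃ m : List G, m.length = n ∧ (∀ x ∈ m, x ∈ S ∨ x⁻¹ ∈ S) ∧
    m.prod = l.prod}) ⟨l.length, l, rfl, hl, rfl⟩

lemma wordLength_inv_le (hg : g ∈ closure S) : wordLength S g⁻¹ ≤ wordLength S g := by
  obtain ⟨l, hlen, hl, rfl⟩ := exists_list_length_eq_wordLength hg
  rw [← hlen, List.prod_inv_reverse]
  refine (wordLength_le_length ?_).trans (by simp)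
  simp only [List.mem_reverse, List.mem_map]
  rintro _ ⟨x, hx, rfl⟩
  simpa [or_comm] using hl x hx

lemma wordLength_mul_le (hg : g ∈ closure S) (hg' : g' ∈ closure S) :
    wordLength S (g * g') ≤ wordLength S g + wordLength S g' := by
  obtain ⟨l, hlen, hl, rfl⟩ := exists_list_length_eq_wordLength hg
  obtain ⟨l', hlen', hl', rfl⟩ := exists_list_length_eq_wordLength hg'
  rw [← hlen, ← hlen', ← List.length_append, ← List.prod_append]
  exact wordLength_le_length fun x hx => (List.mem_append.1 hx).elim (hl x) (hl' x)

lemma wordLength_list_prod_le {l : List G} (hl : ∀ x ∈ l, x ∈ closure S) :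
    wordLength S l.prod ≤ (l.map (wordLength S)).sum := by
  induction l with
  | nil => exact wordLength_le_length (l := []) (by simp)
  | cons x l ih =>
    simp only [List.forall_mem_cons] at hl
    rw [List.prod_cons, List.map_cons, List.sum_cons]
    exact (wordLength_mul_le hl.1 (list_prod_mem hl.2)).trans (by grw [ih hl.2])

lemma wordLength_le_mul_of_forall_le {K : ℕ} (hST : S ⊆ closure T)
    (hK : ∀ s ∈ S, wordLength T s ≤ K) (hg : g ∈ closure S) :
    wordLength T g ≤ K * wordLength S g := by
  obtain ⟨l, hlen, hl, rfl⟩ := exists_list_length_eq_wordLength hg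
  have hmem : ∀ x ∈ l, x ∈ closure T := fun x hx =>
    (hl x hx).elim (fun h => hST h) (fun h => inv_mem_iff.1 (hST h))
  have hle : ∀ x ∈ l, wordLength T x ≤ K := fun x hx =>
    (hl x hx).elim (hK x) fun h => by
      simpa using (wordLength_inv_le (hST h)).trans (hK _ h)
  calc wordLength T l.prod ≤ (l.map (wordLength T)).sum := wordLength_list_prod_le hmem
    _ ≤ (l.map (wordLength T)).length • K :=
      List.sum_le_card_nsmul (l.map (wordLength T)) K (by simpa using hle)
    _ = K * wordLength S l.prod := by rw [List.length_map, smul_eq_mul, hlen, mul_comm]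

lemma wordLength_le_of_subset (hST : S ⊆ T) (hg : g ∈ closure S) :
    wordLength T g ≤ wordLength S g := by
  simpa using wordLength_le_mul_of_forall_le (K := 1) (hST.trans subset_closure)
    (fun s hs => by simpa using wordLength_le_length (l := [s]) (by simpa using Or.inl (hST hs)))
    hg

lemma apply_mem_closure_of_image_subset {f : G →* H} {U : Set H} (hf : f '' S ⊆ U)
    (hg : g ∈ closure S) : f g ∈ closure U :=
  closure_mono hf (by rw [← MonoidHom.map_closure]; exact mem_map_of_mem f hg)

lemma wordLength_map_le {f : G →* H} {U : Set H} (hf : f '' S ⊆ U) (hg : g ∈ closure S) :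
    wordLength U (f g) ≤ wordLength S g := by
  refine (wordLength_le_of_subset hf (apply_mem_closure_of_image_subset subset_rfl hg)).trans ?_
  obtain ⟨l, hlen, hl, rfl⟩ := exists_list_length_eq_wordLength hg
  rw [map_list_prod, ← hlen]
  refine (wordLength_le_length ?_).trans (by simp)
  simp only [List.mem_map]
  rintro _ ⟨x, hx, rfl⟩
  exact (hl x hx).imp (Set.mem_image_of_mem f) fun h => ⟨x⁻¹, h, map_inv f x⟩

lemma commute_of_mem_closure {s t : Set G} (h : ∀ a ∈ s, ∀ b ∈ t, Commute a b)
    (hg : g ∈ closure s) (hg' : g' ∈ closure t) : Commute g g' := by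
  have : closure s ≤ centralizer (closure t) := by
    rw [centralizer_closure, closure_le]
    exact fun a ha b hb => (h a ha b hb).symm
  exact (mem_centralizer_iff.1 (this hg) g' hg').symm

end WordLength

lemma fequiv_distortion_of_wordLength_le {G : Type*} [Group G] {S T : Set G} {H : Subgroup G}
    {C : ℕ} (hC : ∀ g ∈ H, wordLength T g ≤ C * wordLength S g) :
    FEquiv (distortion S T H) (fun n => n) := by
  have hle : ∀ r, distortion S T H r ≤ C * r := fun r =>
    csSup_le' fun _ ⟨g, hg, hr, hn⟩ => hn ▸ (hC g hg).trans (Nat.mul_le_mul_left C hr)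
  refine ⟨⟨C + 1, 1, 1, 0, C.succ_pos, one_pos, one_pos, fun x _ => ?_⟩,
    ⟨1, 1, 1, 0, one_pos, one_pos, one_pos, fun x _ => by simp⟩⟩
  calc distortion S T H x ≤ C * x := hle x
    _ ≤ (C + 1) * (1 * x) + 1 * x := by nlinarith

section RAAG

variable {V G : Type*} [Group G] {Γ : SimpleGraph V}

lemma raagGen_commute {u v : V} (h : Γ.Adj u v) : Commute (raagGen Γ u) (raagGen Γ v) := by
  rw [← commutatorElement_eq_one_iff_commute, commutatorElement_def]
  exact PresentedGroup.one_of_mem ⟨u, v, h, rfl⟩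

def raagLift (c : V → G) (hc : ∀ u v, Γ.Adj u v → Commute (c u) (c v)) : RAAG Γ →* G :=
  PresentedGroup.toGroup (f := c) <| by
    rintro _ ⟨u, v, huv, rfl⟩
    simp [(hc u v huv).eq]

@[simp]
lemma raagLift_raagGen (c : V → G) (hc : ∀ u v, Γ.Adj u v → Commute (c u) (c v)) (v : V) :
    raagLift c hc (raagGen Γ v) = c v :=
  PresentedGroup.toGroup.of _

lemma closure_range_raagGen : closure (Set.range (raagGen Γ)) = ⊤ :=
  PresentedGroup.closure_range_of _

lemma mem_closure_range_raagGen (x : RAAG Γ) : x ∈ closure (Set.range (raagGen Γ)) := by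
  simp [closure_range_raagGen]

lemma raagHom_ext {f g : RAAG Γ →* G} (h : ∀ v, f (raagGen Γ v) = g (raagGen Γ v)) : f = g :=
  PresentedGroup.ext h

lemma commute_apply_of_commute_raagGen {f g : RAAG Γ →* G}
    (h : ∀ u v, Commute (f (raagGen Γ u)) (g (raagGen Γ v))) (x y : RAAG Γ) :
    Commute (f x) (g y) := by
  refine commute_of_mem_closure ?_
    (apply_mem_closure_of_image_subset subset_rfl (mem_closure_range_raagGen x))
    (apply_mem_closure_of_image_subset subset_rfl (mem_closure_range_raagGen y))
  rintro _ ⟨_, ⟨u, rfl⟩, rfl⟩ _ ⟨_, ⟨v, rfl⟩, rfl⟩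
  exact h u v

lemma raagHom_apply_eq_mul {k f g : RAAG Γ →* G}
    (hfg : ∀ u v, Commute (f (raagGen Γ u)) (g (raagGen Γ v)))
    (hk : ∀ v, k (raagGen Γ v) = f (raagGen Γ v) * g (raagGen Γ v)) (x : RAAG Γ) :
    k x = f x * g x := by
  have : k = (f.noncommCoprod g (commute_apply_of_commute_raagGen hfg)).comp
      ((MonoidHom.id _).prod (MonoidHom.id _)) :=
    raagHom_ext fun v => by simpa using hk v
  rw [this]
  rfl

open Classical in
noncomputable def raagProj (Γ : SimpleGraph V) (U : Set V) : RAAG Γ →* RAAG Γ :=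
  raagLift (fun v => if v ∈ U then raagGen Γ v else 1) fun u v huv => by
    split_ifs
    exacts [raagGen_commute huv, .one_right _, .one_left _, .one_left _]

lemma raagProj_raagGen_of_mem {U : Set V} {v : V} (hv : v ∈ U) :
    raagProj Γ U (raagGen Γ v) = raagGen Γ v := by
  simp [raagProj, hv]

lemma raagProj_raagGen_of_notMem {U : Set V} {v : V} (hv : v ∉ U) :
    raagProj Γ U (raagGen Γ v) = 1 := by
  simp [raagProj, hv]

lemma raagProj_mul_raagProj_compl {U : Set V} (hU : ∀ u ∈ U, ∀ w ∉ U, Γ.Adj u w)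
    (x : RAAG Γ) : raagProj Γ U x * raagProj Γ Uᶜ x = x := by
  refine (raagHom_apply_eq_mul (k := MonoidHom.id _) (fun u w => ?_) (fun v => ?_) x).symm
  · by_cases hu : u ∈ U
    · by_cases hw : w ∈ U
      · simp [raagProj_raagGen_of_notMem (U := Uᶜ) (Set.notMem_compl_iff.2 hw)]
      · rw [raagProj_raagGen_of_mem hu, raagProj_raagGen_of_mem (U := Uᶜ) hw]
        exact raagGen_commute (hU u hu w hw)
    · simp [raagProj_raagGen_of_notMem hu]
  · by_cases hv : v ∈ U
    · simp [raagProj_raagGen_of_mem hv, raagProj_raagGen_of_notMem (U := Uᶜ)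
        (Set.notMem_compl_iff.2 hv)]
    · simp [raagProj_raagGen_of_notMem hv, raagProj_raagGen_of_mem (U := Uᶜ) hv]

end RAAG

section Partner

variable {V : Type*} {Γ : SimpleGraph V} (t : V → V)
  (ht : ∀ u v, Commute (raagGen Γ (t u)) (raagGen Γ (t v)))

def partnerHom : RAAG Γ →* RAAG Γ :=
  raagLift (fun v => raagGen Γ (t v)) fun u v _ => ht u v

@[simp]
lemma partnerHom_raagGen (v : V) : partnerHom t ht (raagGen Γ v) = raagGen Γ (t v) :=
  raagLift_raagGen _ _ v

variable {U : Set V} (hU : ∀ u ∈ U, ∀ v ∈ U, Commute (raagGen Γ u) (raagGen Γ (t v)))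

open Classical in
noncomputable def shiftHom : RAAG Γ →* RAAG Γ :=
  raagLift (fun v => if v ∈ U then raagGen Γ v * (raagGen Γ (t v))⁻¹ else 1) fun u v huv => by
    split_ifs with hu hv hv
    · exact ((raagGen_commute huv).mul_right (hU u hu v hv).inv_right).mul_left
        ((hU v hv u hu).symm.mul_right (ht u v).inv_right).inv_left
    exacts [.one_right _, .one_left _, .one_left _]

lemma shiftHom_raagGen_of_mem {v : V} (hv : v ∈ U) :
    shiftHom t ht hU (raagGen Γ v) = raagGen Γ v * (raagGen Γ (t v))⁻¹ := by
  simp [shiftHom, hv]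

lemma shiftHom_raagGen_of_notMem {v : V} (hv : v ∉ U) : shiftHom t ht hU (raagGen Γ v) = 1 := by
  simp [shiftHom, hv]

lemma commute_shiftHom_partnerHom_raagProj (x y : RAAG Γ) :
    Commute (shiftHom t ht hU x) (partnerHom t ht (raagProj Γ U y)) := by
  refine commute_apply_of_commute_raagGen (g := (partnerHom t ht).comp (raagProj Γ U))
    (fun u v => ?_) x y
  by_cases hu : u ∈ U
  · by_cases hv : v ∈ U
    · simp only [shiftHom_raagGen_of_mem t ht hU hu, MonoidHom.comp_apply,
        raagProj_raagGen_of_mem hv, partnerHom_raagGen]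
      exact (hU u hu v hv).mul_left (ht u v).inv_left
    · simp [raagProj_raagGen_of_notMem hv]
  · simp [shiftHom_raagGen_of_notMem t ht hU hu]

lemma shiftHom_mul_partnerHom_raagProj (x : RAAG Γ) :
    shiftHom t ht hU x * partnerHom t ht (raagProj Γ U x) = raagProj Γ U x := by
  refine (raagHom_apply_eq_mul (g := (partnerHom t ht).comp (raagProj Γ U))
    (fun u v => commute_shiftHom_partnerHom_raagProj t ht hU _ _) (fun v => ?_) x).symm
  by_cases hv : v ∈ U
  · simp [shiftHom_raagGen_of_mem t ht hU hv, raagProj_raagGen_of_mem hv]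
  · simp [shiftHom_raagGen_of_notMem t ht hU hv, raagProj_raagGen_of_notMem hv]

lemma partnerHom_raagProj_mul_shiftHom (x : RAAG Γ) :
    partnerHom t ht (raagProj Γ U x) * shiftHom t ht hU x = raagProj Γ U x := by
  rw [← (commute_shiftHom_partnerHom_raagProj t ht hU x x).eq,
    shiftHom_mul_partnerHom_raagProj]

end Partner

section Splitting

variable {V ι : Type*} {Γ : SimpleGraph V} {lab : V → ι}

def sameLabelRatios (Γ : SimpleGraph V) (lab : V → ι) : Set (RAAG Γ) :=
  {x | ∃ v w, lab v = lab w ∧ raagGen Γ v * (raagGen Γ w)⁻¹ = x}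

lemma sameLabelRatios_finite [Finite V] : (sameLabelRatios Γ lab).Finite :=
  (Set.finite_range fun p : V × V => raagGen Γ p.1 * (raagGen Γ p.2)⁻¹).subset
    fun _ ⟨v, w, _, hx⟩ => ⟨(v, w), hx⟩

lemma shiftHom_image_subset_sameLabelRatios {t : V → V} (hlab : ∀ v, lab (t v) = lab v)
    {ht : ∀ u v, Commute (raagGen Γ (t u)) (raagGen Γ (t v))} {U : Set V}
    {hU : ∀ u ∈ U, ∀ v ∈ U, Commute (raagGen Γ u) (raagGen Γ (t v))} :
    shiftHom t ht hU '' Set.range (raagGen Γ) ⊆ sameLabelRatios Γ lab := by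
  rintro _ ⟨_, ⟨v, rfl⟩, rfl⟩
  by_cases hv : v ∈ U
  · exact ⟨v, t v, (hlab v).symm, (shiftHom_raagGen_of_mem t ht hU hv).symm⟩
  · exact ⟨v, v, rfl, by rw [shiftHom_raagGen_of_notMem t ht hU hv, mul_inv_cancel]⟩

structure IsJoinSplitting (Γ : SimpleGraph V) (lab : V → ι) (A : Set V) (a b : ι → V) :
    Prop where
  adj_of_mem_of_notMem : ∀ u ∈ A, ∀ w ∉ A, Γ.Adj u w
  adj_of_lab_ne : ∀ u v, lab u ≠ lab v → Γ.Adj u v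
  left_mem : ∀ i, a i ∈ A
  right_notMem : ∀ i, b i ∉ A
  lab_left : ∀ i, lab (a i) = i
  lab_right : ∀ i, lab (b i) = i

lemma exists_isJoinSplitting (hjoin : ∀ i, IsJoin (Γ.induce {v | lab v = i}))
    (hcomm : ∀ i j, i ≠ j → ∀ u v, lab u = i → lab v = j → Γ.Adj u v) :
    ∃ A a b, IsJoinSplitting Γ lab A a b := by
  choose V₁ V₂ hV₁ hV₂ hdisj hcover hadj using hjoin
  choose a ha using hV₁
  choose b hb using hV₂
  refine ⟨⋃ i, Subtype.val '' V₁ i, fun i => a i, fun i => b i,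
    ⟨?_, fun u v h => hcomm _ _ h u v rfl rfl, fun i => Set.mem_iUnion.2 ⟨i, a i, ha i, rfl⟩,
      ?_, fun i => (a i).2, fun i => (b i).2⟩⟩
  · rintro _ hu w hw
    obtain ⟨i, x, hx, rfl⟩ := Set.mem_iUnion.1 hu
    by_cases hwi : lab w = i
    · have hy : (⟨w, hwi⟩ : {v | lab v = i}) ∈ V₂ i := by
        refine ((hcover i).symm ▸ Set.mem_univ _ : _ ∈ V₁ i ∪ V₂ i).resolve_left fun hy => ?_
        exact hw (Set.mem_iUnion.2 ⟨i, _, hy, rfl⟩)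
      exact hadj i x hx _ hy
    · exact hcomm i (lab w) (Ne.symm hwi) x w x.2 rfl
  · intro i hi
    obtain ⟨j, x, hx, hxb⟩ := Set.mem_iUnion.1 hi
    obtain rfl : j = i := x.2.symm.trans (congrArg lab hxb ▸ (b i).2)
    exact Set.disjoint_left.1 (hdisj j) hx (Subtype.ext hxb ▸ hb j)

end Splitting

open Classical in
noncomputable def joinPartner {V ι : Type*} (lab : V → ι) (A : Set V) (a b : ι → V) (v : V) :
    V :=
  if v ∈ A then b (lab v) else a (lab v)

lemma joinPartner_mem_range {V ι : Type*} {lab : V → ι} {A : Set V} {a b : ι → V}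
    (v : V) : joinPartner lab A a b v ∈ Set.range a ∪ Set.range b := by
  unfold joinPartner
  split_ifs
  exacts [Or.inr ⟨_, rfl⟩, Or.inl ⟨_, rfl⟩]

namespace IsJoinSplitting

variable {V ι : Type*} {Γ : SimpleGraph V} {lab : V → ι} {A : Set V} {a b : ι → V}

lemma commute_raagGen_of_mem_range (hS : IsJoinSplitting Γ lab A a b) {x y : V}
    (hx : x ∈ Set.range a ∪ Set.range b) (hy : y ∈ Set.range a ∪ Set.range b) :
    Commute (raagGen Γ x) (raagGen Γ y) := by
  have same_side : ∀ c : ι → V, (∀ i, lab (c i) = i) → ∀ i j,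
      Commute (raagGen Γ (c i)) (raagGen Γ (c j)) := fun c hc i j => by
    by_cases hij : i = j
    · rw [hij]
    · exact raagGen_commute (hS.adj_of_lab_ne _ _ (by rwa [hc, hc]))
  rcases hx with ⟨i, rfl⟩ | ⟨i, rfl⟩ <;> rcases hy with ⟨j, rfl⟩ | ⟨j, rfl⟩
  · exact same_side a hS.lab_left i j
  · exact raagGen_commute (hS.adj_of_mem_of_notMem _ (hS.left_mem i) _ (hS.right_notMem j))
  · exact (raagGen_commute
      (hS.adj_of_mem_of_notMem _ (hS.left_mem j) _ (hS.right_notMem i))).symm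
  · exact same_side b hS.lab_right i j

lemma lab_joinPartner (hS : IsJoinSplitting Γ lab A a b) (v : V) :
    lab (joinPartner lab A a b v) = lab v := by
  unfold joinPartner
  split_ifs
  exacts [hS.lab_right _, hS.lab_left _]

lemma commute_joinPartner (hS : IsJoinSplitting Γ lab A a b) (u v : V) :
    Commute (raagGen Γ (joinPartner lab A a b u)) (raagGen Γ (joinPartner lab A a b v)) :=
  hS.commute_raagGen_of_mem_range (joinPartner_mem_range u) (joinPartner_mem_range v)

lemma commute_joinPartner_of_mem (hS : IsJoinSplitting Γ lab A a b) :
    ∀ u ∈ A, ∀ v ∈ A, Commute (raagGen Γ u) (raagGen Γ (joinPartner lab A a b v)) :=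
  fun u hu v hv => by
    rw [joinPartner, if_pos hv]
    exact raagGen_commute (hS.adj_of_mem_of_notMem u hu _ (hS.right_notMem _))

lemma commute_joinPartner_of_mem_compl (hS : IsJoinSplitting Γ lab A a b) :
    ∀ u ∈ Aᶜ, ∀ v ∈ Aᶜ, Commute (raagGen Γ u) (raagGen Γ (joinPartner lab A a b v)) :=
  fun u hu v hv => by
    rw [joinPartner, if_neg hv]
    exact (raagGen_commute (hS.adj_of_mem_of_notMem _ (hS.left_mem _) u hu)).symm


lemma commute_partnerRatio (hS : IsJoinSplitting Γ lab A a b) (u v : V) :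
    Commute (raagGen Γ (joinPartner lab A a b u) * (raagGen Γ (a (lab u)))⁻¹)
      (raagGen Γ (joinPartner lab A a b v) * (raagGen Γ (a (lab v)))⁻¹) := by
  have hK : ∀ {x y}, x ∈ Set.range a ∪ Set.range b → y ∈ Set.range a ∪ Set.range b →
      Commute (raagGen Γ x) (raagGen Γ y) := hS.commute_raagGen_of_mem_range
  have ha : ∀ w, a (lab w) ∈ Set.range a ∪ Set.range b := fun w => Or.inl ⟨_, rfl⟩
  have hp := joinPartner_mem_range (lab := lab) (A := A) (a := a) (b := b)
  exact ((hK (hp u) (hp v)).mul_right (hK (hp u) (ha v)).inv_right).mul_left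
    ((hK (ha u) (hp v)).mul_right (hK (ha u) (ha v)).inv_right).inv_left

noncomputable def partnerRatioHom (hS : IsJoinSplitting Γ lab A a b) : RAAG Γ →* RAAG Γ :=
  raagLift (fun v => raagGen Γ (joinPartner lab A a b v) * (raagGen Γ (a (lab v)))⁻¹)
    fun u v _ => hS.commute_partnerRatio u v

lemma partnerRatioHom_image_subset (hS : IsJoinSplitting Γ lab A a b) :
    hS.partnerRatioHom '' Set.range (raagGen Γ) ⊆ sameLabelRatios Γ lab := by
  rintro _ ⟨_, ⟨v, rfl⟩, rfl⟩
  exact ⟨joinPartner lab A a b v, a (lab v), by rw [hS.lab_joinPartner, hS.lab_left],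
    by simp [partnerRatioHom]⟩

variable [Fintype ι] [DecidableEq ι] {Φ : RAAG Γ →* (ι → Multiplicative ℤ)}

def leftBaseHom (hS : IsJoinSplitting Γ lab A a b) : (ι → Multiplicative ℤ) →* RAAG Γ :=
  MonoidHom.noncommPiCoprod (fun i => zpowersHom _ (raagGen Γ (a i))) <| by
    intro i j _ _ _
    simpa using
      (hS.commute_raagGen_of_mem_range (Or.inl ⟨i, rfl⟩) (Or.inl ⟨j, rfl⟩)).zpow_zpow _ _

lemma leftBaseHom_mulSingle (hS : IsJoinSplitting Γ lab A a b) (i : ι) :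
    hS.leftBaseHom (Pi.mulSingle i (Multiplicative.ofAdd 1)) = raagGen Γ (a i) := by
  refine (MonoidHom.noncommPiCoprod_mulSingle _ i _).trans ?_
  rw [zpowersHom_apply, toAdd_ofAdd, zpow_one]

lemma partnerHom_eq_partnerRatioHom_mul (hS : IsJoinSplitting Γ lab A a b)
    (hΦ : ∀ v, Φ (raagGen Γ v) = Pi.mulSingle (lab v) (Multiplicative.ofAdd 1)) (x : RAAG Γ) :
    partnerHom _ hS.commute_joinPartner x = hS.partnerRatioHom x * hS.leftBaseHom (Φ x) := by
  refine raagHom_apply_eq_mul (g := hS.leftBaseHom.comp Φ) (fun u v => ?_) (fun v => ?_) x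
  · simp only [partnerRatioHom, raagLift_raagGen, MonoidHom.comp_apply, hΦ,
      leftBaseHom_mulSingle]
    exact (hS.commute_raagGen_of_mem_range (joinPartner_mem_range u) (Or.inl ⟨_, rfl⟩)).mul_left
      (hS.commute_raagGen_of_mem_range (Or.inl ⟨_, rfl⟩) (Or.inl ⟨_, rfl⟩)).inv_left
  · simp [partnerRatioHom, leftBaseHom_mulSingle, hΦ]

lemma eq_shiftHom_mul_partnerRatioHom_mul_shiftHom (hS : IsJoinSplitting Γ lab A a b)
    (hΦ : ∀ v, Φ (raagGen Γ v) = Pi.mulSingle (lab v) (Multiplicative.ofAdd 1))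
    {h : RAAG Γ} (hh : h ∈ Φ.ker) :
    h = shiftHom _ hS.commute_joinPartner hS.commute_joinPartner_of_mem h *
      hS.partnerRatioHom h *
      shiftHom _ hS.commute_joinPartner hS.commute_joinPartner_of_mem_compl h := by
  set τ := partnerHom _ hS.commute_joinPartner
  have hsplit := raagProj_mul_raagProj_compl hS.adj_of_mem_of_notMem
  calc h = raagProj Γ A h * raagProj Γ Aᶜ h := (hsplit h).symm
    _ = shiftHom _ hS.commute_joinPartner hS.commute_joinPartner_of_mem h *
          τ (raagProj Γ A h * raagProj Γ Aᶜ h) *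
          shiftHom _ hS.commute_joinPartner hS.commute_joinPartner_of_mem_compl h := by
      rw [map_mul, ← mul_assoc, shiftHom_mul_partnerHom_raagProj, mul_assoc,
        partnerHom_raagProj_mul_shiftHom]
    _ = _ := by
      rw [hsplit, partnerHom_eq_partnerRatioHom_mul hS hΦ, MonoidHom.mem_ker.1 hh, map_one,
        mul_one]

lemma wordLength_sameLabelRatios_le (hS : IsJoinSplitting Γ lab A a b)
    (hΦ : ∀ v, Φ (raagGen Γ v) = Pi.mulSingle (lab v) (Multiplicative.ofAdd 1))
    {h : RAAG Γ} (hh : h ∈ Φ.ker) :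
    h ∈ closure (sameLabelRatios Γ lab) ∧
      wordLength (sameLabelRatios Γ lab) h ≤ 3 * wordLength (Set.range (raagGen Γ)) h := by
  have heq := hS.eq_shiftHom_mul_partnerRatioHom_mul_shiftHom hΦ hh
  set f₁ := shiftHom _ hS.commute_joinPartner hS.commute_joinPartner_of_mem
  set f₃ := shiftHom _ hS.commute_joinPartner hS.commute_joinPartner_of_mem_compl
  have hf₁ : f₁ '' _ ⊆ _ := shiftHom_image_subset_sameLabelRatios hS.lab_joinPartner
  have hf₃ : f₃ '' _ ⊆ _ := shiftHom_image_subset_sameLabelRatios hS.lab_joinPartner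
  have hg := mem_closure_range_raagGen h
  have hm₁ := apply_mem_closure_of_image_subset hf₁ hg
  have hm₂ := apply_mem_closure_of_image_subset hS.partnerRatioHom_image_subset hg
  have hm₃ := apply_mem_closure_of_image_subset hf₃ hg
  refine ⟨heq ▸ mul_mem (mul_mem hm₁ hm₂) hm₃, ?_⟩
  calc wordLength _ h = wordLength _ (f₁ h * hS.partnerRatioHom h * f₃ h) := congrArg _ heq
    _ ≤ wordLength _ (f₁ h) + wordLength _ (hS.partnerRatioHom h) + wordLength _ (f₃ h) :=
      (wordLength_mul_le (mul_mem hm₁ hm₂) hm₃).trans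
        (Nat.add_le_add_right (wordLength_mul_le hm₁ hm₂) _)
    _ ≤ 3 * wordLength _ h := by
      have := wordLength_map_le hf₁ hg
      have := wordLength_map_le hS.partnerRatioHom_image_subset hg
      have := wordLength_map_le hf₃ hg
      omega

lemma exists_wordLength_le_mul_of_mem_ker [Finite V] (hS : IsJoinSplitting Γ lab A a b)
    (hΦ : ∀ v, Φ (raagGen Γ v) = Pi.mulSingle (lab v) (Multiplicative.ofAdd 1))
    {T : Set (RAAG Γ)} (hT : closure T = Φ.ker) :
    ∃ C, ∀ h ∈ Φ.ker, wordLength T h ≤ C * wordLength (Set.range (raagGen Γ)) h := by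
  obtain ⟨M, hM⟩ := (sameLabelRatios_finite.image (wordLength T)).bddAbove
  have hsub : sameLabelRatios Γ lab ⊆ closure T := by
    rintro _ ⟨v, w, hvw, rfl⟩
    simp [hT, hΦ, hvw]
  refine ⟨M * 3, fun h hh => ?_⟩
  obtain ⟨hmem, hle⟩ := hS.wordLength_sameLabelRatios_le hΦ hh
  calc wordLength T h ≤ M * wordLength (sameLabelRatios Γ lab) h :=
        wordLength_le_mul_of_forall_le hsub (fun s hs => hM ⟨s, hs, rfl⟩) hmem
    _ ≤ M * 3 * wordLength (Set.range (raagGen Γ)) h := by rw [mul_assoc]; gcongr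

end IsJoinSplitting

theorem stmt19_general {V : Type*} [Fintype V] (Γ : SimpleGraph V)
    (d : ℕ) (lab : V → Fin d)
    (Φ : RAAG Γ →* (Fin d → Multiplicative ℤ))
    (hΦ : ∀ v : V, Φ (raagGen Γ v) = Pi.mulSingle (lab v) (Multiplicative.ofAdd 1))
    -- each basis subgraph is a join
    (hjoin : ∀ i : Fin d, IsJoin (Γ.induce {v : V | lab v = i}))
    -- each pair of distinct basis subgraphs commutes
    (hcomm : ∀ i j : Fin d, i ≠ j → ∀ u v : V, lab u = i → lab v = j → Γ.Adj u v) :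
    ∀ T : Set (RAAG Γ), T.Finite → T ⊆ (Φ.ker : Set (RAAG Γ)) →
      Subgroup.closure T = Φ.ker →
      FEquiv (distortion (Set.range (raagGen Γ)) T Φ.ker) (fun n => n) := by
  intro T _ _ hT
  obtain ⟨A, a, b, hS⟩ := exists_isJoinSplitting hjoin hcomm
  obtain ⟨C, hC⟩ := hS.exists_wordLength_le_mul_of_mem_ker hΦ hT
  exact fequiv_distortion_of_wordLength_le hC

theorem stmt19 {V : Type*} [Fintype V] (Γ : SimpleGraph V) (hΓ : Γ.Connected)
    (d : ℕ) (lab : V → Fin d) (hlab : Function.Surjective lab)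
    (Φ : RAAG Γ →* (Fin d → Multiplicative ℤ))
    (hΦ : ∀ v : V, Φ (raagGen Γ v) = Pi.mulSingle (lab v) (Multiplicative.ofAdd 1))
    -- `H_Φ` is strong: each basis subgraph is connected and strongly dominating
    (hstrong : ∀ i : Fin d, (Γ.induce {v : V | lab v = i}).Connected ∧
      ∃ u : V, lab u = i ∧ ∀ v : V, lab v ≠ i → Γ.Adj u v)
    -- each basis subgraph is a join
    (hjoin : ∀ i : Fin d, IsJoin (Γ.induce {v : V | lab v = i}))
    -- each pair of distinct basis subgraphs commutes
    (hcomm : ∀ i j : Fin d, i ≠ j → ∀ u v : V, lab u = i → lab v = j → Γ.Adj u v) :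
    ∀ T : Set (RAAG Γ), T.Finite → T ⊆ (Φ.ker : Set (RAAG Γ)) →
      Subgroup.closure T = Φ.ker →
      FEquiv (distortion (Set.range (raagGen Γ)) T Φ.ker) (fun n => n) :=
  stmt19_general Γ d lab Φ hΦ hjoin hcomm
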